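/- Let X be a real infinite-dimensional Banach space with an unconditional Schauder basis (x_n)_{n=1}^∞ with unconditional constant K_u. Then sh((x_n)) ≤ K_u·α_{ℓ₁}(X). -/

import Mathlib

open Filter Metric NormedSpace Set Topology

noncomputable section

variable {E : Type*} [NormedAddCommGroup E] [NormedSpace ℝ E]

/-- `f` is the sequence of coordinate functionals of the Schauder basis `x`:
every vector has an expansion along `x`, and such expansions are unique. -/
structure IsSchauderBasis (x : ℕ → E) (f : ℕ → E →L[ℝ] ℝ) : Prop where
  expand : ∀ v : E,
    Tendsto (fun n => ∑ i ∈ Finset.range n, f i v • x i) atTop (𝓝 v)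
  unique : ∀ (a : ℕ → ℝ) (v : E),
    Tendsto (fun n => ∑ i ∈ Finset.range n, a i • x i) atTop (𝓝 v) → ∀ i, a i = f i v

/-- the `n`-th basis projection `P_n`. -/
def basisProj (x : ℕ → E) (f : ℕ → E →L[ℝ] ℝ) (n : ℕ) : E →L[ℝ] E :=
  ∑ i ∈ Finset.range n, (f i).smulRight (x i)

/-- closed linear span of `{y i : i ≥ n}`. -/
def tailSpan (y : ℕ → E) (n : ℕ) : Submodule ℝ E :=
  (Submodule.span ℝ (y '' {i | n ≤ i})).topologicalClosure

/-- `‖g‖_n` : the norm of the restriction of `g` to the closed span of the tail of `y`. -/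
def tailNorm (y : ℕ → E) (g : E →L[ℝ] ℝ) (n : ℕ) : ℝ :=
  ‖g.comp (tailSpan y n).subtypeL‖

/-- the quantity `sh` measuring how far a basic sequence is from being shrinking. -/
def sh (y : ℕ → E) : ℝ :=
  sSup ((fun g : E →L[ℝ] ℝ => limsup (tailNorm y g) atTop) '' {g | ‖g‖ ≤ 1})

/-- non-symmetrised Hausdorff distance `d̂(A,B)`. -/
def hdist (A B : Set E) : ℝ := sSup ((fun a => infDist a B) '' A)

/-- ordinary distance between two sets. -/
def setDist (A B : Set E) : ℝ := sInf {d : ℝ | ∃ a ∈ A, ∃ b ∈ B, d = dist a b}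

/-- `ca` measures how far a sequence is from being norm-Cauchy. -/
def ca (z : ℕ → E) : ℝ :=
  ⨅ n : ℕ, sSup {d : ℝ | ∃ k, n ≤ k ∧ ∃ l, n ≤ l ∧ d = ‖z k - z l‖}

/-- measure of non-separability. -/
def sep (A : Set E) : ℝ :=
  sInf {ε : ℝ | 0 < ε ∧ ∃ C : Set E, C.Countable ∧ ∀ a ∈ A, ∃ c ∈ C, ‖a - c‖ ≤ ε}

/-- `V`: the closed linear span of the coordinate functionals. -/
def dualSpan (g : ℕ → E →L[ℝ] ℝ) : Submodule ℝ (StrongDual ℝ E) :=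
  (Submodule.span ℝ (Set.range g)).topologicalClosure

lemma mem_dualSpan (g : ℕ → E →L[ℝ] ℝ) (i : ℕ) : g i ∈ dualSpan g :=
  Submodule.le_topologicalClosure _ (Submodule.subset_span ⟨i, rfl⟩)

/-- the quantity `bc₁` measuring non-bounded-completeness. -/
def bc1 (y : ℕ → E) : ℝ :=
  sSup {c : ℝ | ∃ a : ℕ → ℝ,
    (∀ n, ‖∑ i ∈ Finset.range n, a i • y i‖ ≤ 1) ∧
    c = ca (fun n => ∑ i ∈ Finset.range n, a i • y i)}

/-- the quantity `bc₂`. -/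
def bc2 (y : ℕ → E) (g : ℕ → E →L[ℝ] ℝ) : ℝ :=
  sSup {c : ℝ | ∃ φ : ↥(dualSpan g) →L[ℝ] ℝ, @norm (↥(dualSpan g) →L[ℝ] ℝ)
      (ContinuousLinearMap.hasOpNorm (𝕜 := ℝ) (𝕜₂ := ℝ) (E := ↥(dualSpan g)) (F := ℝ)) φ ≤ 1 ∧
    c = ca (fun n => ∑ i ∈ Finset.range n, φ ⟨g i, mem_dualSpan g i⟩ • y i)}

/-- the quantity `bc₃`. -/
def bc3 (y : ℕ → E) (g : ℕ → E →L[ℝ] ℝ) : ℝ :=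
  sSup {c : ℝ | ∃ Φ : StrongDual ℝ (StrongDual ℝ E), ‖Φ‖ ≤ 1 ∧
    c = ca (fun n => ∑ i ∈ Finset.range n, Φ (g i) • y i)}

/-- `α_Y(X)`: measures how well `Y` embeds isomorphically into `X`. -/
def alpha (Y X : Type*) [NormedAddCommGroup Y] [NormedSpace ℝ Y]
    [NormedAddCommGroup X] [NormedSpace ℝ X] : ℝ :=
  sSup {c : ℝ | ∃ T : Y →L[ℝ] X, ‖T‖ ≤ 1 ∧ ∀ y : Y, c * ‖y‖ ≤ ‖T y‖}

/-- `β_Y(X)`: measures how well `Y` embeds complementably into `X`. -/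
def beta (Y X : Type*) [NormedAddCommGroup Y] [NormedSpace ℝ Y]
    [NormedAddCommGroup X] [NormedSpace ℝ X] : ℝ :=
  sSup {c : ℝ | ∃ (A : X →L[ℝ] Y) (B : Y →L[ℝ] X),
    A.comp B = ContinuousLinearMap.id ℝ Y ∧ c * (‖A‖ * ‖B‖) ≤ 1}

/-- weak-star closure of a subset of the bidual. -/
def wstarClosure {X : Type*} [NormedAddCommGroup X] [NormedSpace ℝ X]
    (S : Set (StrongDual ℝ (StrongDual ℝ X))) : Set (StrongDual ℝ (StrongDual ℝ X)) :=
  {z | StrongDual.toWeakDual z ∈ closure (StrongDual.toWeakDual '' S)}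

/-- the measure of weak non-compactness `wk_X(A)`. -/
def wk (X : Type*) [NormedAddCommGroup X] [NormedSpace ℝ X] (A : Set X) : ℝ :=
  hdist (wstarClosure ((inclusionInDoubleDual ℝ X) '' A))
    (Set.range (inclusionInDoubleDual ℝ X))

/-- weak-star cluster points in the bidual of a sequence in `X`. -/
def wclust {X : Type*} [NormedAddCommGroup X] [NormedSpace ℝ X] (u : ℕ → X) :
    Set (StrongDual ℝ (StrongDual ℝ X)) :=
  {z | MapClusterPt (StrongDual.toWeakDual z) atTop
      (fun n => StrongDual.toWeakDual (inclusionInDoubleDual ℝ X (u n)))}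

/-- the measure of weak non-compactness `wck_X(A)`. -/
def wck (X : Type*) [NormedAddCommGroup X] [NormedSpace ℝ X] (A : Set X) : ℝ :=
  sSup {c : ℝ | ∃ u : ℕ → X, (∀ n, u n ∈ A) ∧
    c = setDist (wclust u) (Set.range (inclusionInDoubleDual ℝ X))}


/-- the canonical map `j : X → V*` for a subspace `V` of the dual,
`⟨j v, x*⟩ = x*(v)`. -/
def jfun {X : Type*} [NormedAddCommGroup X] [NormedSpace ℝ X]
    (V : Submodule ℝ (StrongDual ℝ X)) (v : X) : ↥V →L[ℝ] ℝ :=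
  (inclusionInDoubleDual ℝ X v).comp V.subtypeL

/-- the space `ℓ₁` of absolutely summable real sequences. -/
abbrev ell1 : Type := lp (fun _ : ℕ => ℝ) 1

/-- the space `c₀` of real sequences converging to zero, with the sup norm. -/
abbrev czero : Type := ZeroAtInftyContinuousMap ℕ ℝ

end

/-!
Fix `g` in the dual unit ball and `c < limsup ‖g‖ₙ`. Since `‖g‖ₙ > c` infinitely often and finite
spans are dense in the tails, there are successive blocks `wₖ` of the basis in the unit ball with
`g wₖ ≥ c`. The map `T a = ∑ aₖ wₖ` from `ℓ₁` has norm `≤ 1`, and a sign change `M_θ` constant on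
each block gives `c ‖a‖ ≤ ∑ |aₖ| g wₖ = g (M_θ (T a)) ≤ K_u ‖T a‖`, whence `c ≤ K_u α_{ℓ₁}(X)`.
The supremum defining `K_u` is finite (so not the junk value of an unbounded `⨆`) by a gliding
hump argument and Banach–Steinhaus.
-/

open Function

lemma exists_strictMono_forall_succ {P : ℕ → ℕ → Prop} (h : ∀ m, ∃ n, m < n ∧ P m n) :
    ∃ φ : ℕ → ℕ, StrictMono φ ∧ ∀ k, P (φ k) (φ (k + 1)) := by
  choose N hlt hP using h
  refine ⟨fun k => N^[k] 0, strictMono_nat_of_lt_succ fun k => ?_, fun k => ?_⟩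
  · simpa only [Function.iterate_succ_apply'] using hlt _
  · simpa only [Function.iterate_succ_apply'] using hP _

lemma exists_sign_eqOn_of_pairwise_disjoint {G : ℕ → Set ℕ} (hG : Pairwise (Disjoint on G))
    {σ : ℕ → ℝ} (hσ : ∀ k, |σ k| = 1) :
    ∃ θ : ℕ → ℝ, (∀ n, |θ n| = 1) ∧ ∀ k, ∀ i ∈ G k, θ i = σ k := by
  classical
  refine ⟨fun i => if h : ∃ k, i ∈ G k then σ h.choose else 1, fun n => ?_, fun k i hi => ?_⟩
  · dsimp only
    split
    · exact hσ _
    · exact abs_one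
  · have h : ∃ k, i ∈ G k := ⟨k, hi⟩
    dsimp only
    rw [dif_pos h, hG.eq (Set.not_disjoint_iff.2 ⟨i, h.choose_spec, hi⟩)]

section NormedGroup

variable {E : Type*} [NormedAddCommGroup E]

lemma norm_sum_sign_smul_le [NormedSpace ℝ E] {u : ℕ → E} {C : ℝ}
    (hC : ∀ F : Finset ℕ, ‖∑ i ∈ F, u i‖ ≤ C) {θ : ℕ → ℝ} (hθ : ∀ n, |θ n| = 1)
    (s : Finset ℕ) : ‖∑ i ∈ s, θ i • u i‖ ≤ 2 * C := by
  classical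
  have hneg : ∀ i ∈ s.filter (fun i => ¬θ i = 1), θ i • u i = -u i := fun i hi => by
    rcases (abs_eq zero_le_one).1 (hθ i) with h | h
    · exact absurd h (Finset.mem_filter.1 hi).2
    · rw [h, neg_one_smul]
  have hpos : ∀ i ∈ s.filter (fun i => θ i = 1), θ i • u i = u i := fun i hi => by
    rw [(Finset.mem_filter.1 hi).2, one_smul]
  rw [← Finset.sum_filter_add_sum_filter_not s (fun i => θ i = 1), Finset.sum_congr rfl hpos,
    Finset.sum_congr rfl hneg, Finset.sum_neg_distrib, ← sub_eq_add_neg]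
  calc _ ≤ C + C := (norm_sub_le _ _).trans (add_le_add (hC _) (hC _))
    _ = 2 * C := by ring

/-- Gliding hump: otherwise successive disjoint blocks with sums of norm `> 1` assemble into a
subseries that is not Cauchy. -/
theorem exists_norm_finset_sum_le_of_cauchySeq_indicator {u : ℕ → E}
    (h : ∀ U : Set ℕ, CauchySeq fun n => ∑ i ∈ Finset.range n, U.indicator u i) :
    ∃ C, ∀ F : Finset ℕ, ‖∑ i ∈ F, u i‖ ≤ C := by
  classical
  by_contra! hC
  have hstep : ∀ m, ∃ n, m < n ∧ ∃ F ⊆ Finset.Ico m n, 1 < ‖∑ i ∈ F, u i‖ := by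
    intro m
    obtain ⟨F, hF⟩ := hC (∑ i ∈ Finset.range m, ‖u i‖ + 1)
    refine ⟨m + F.sup id + 1, by omega, F.filter (m ≤ ·), fun i hi => ?_, ?_⟩
    · have := Finset.le_sup (f := id) (Finset.mem_filter.1 hi).1
      simp only [Finset.mem_Ico]
      exact ⟨(Finset.mem_filter.1 hi).2, by simp only [id] at this; omega⟩
    · have hhead : ‖∑ i ∈ F.filter (¬m ≤ ·), u i‖ ≤ ∑ i ∈ Finset.range m, ‖u i‖ :=
        (norm_sum_le _ _).trans <| Finset.sum_le_sum_of_subset_of_nonneg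
          (fun i hi => Finset.mem_range.2 (not_le.1 (Finset.mem_filter.1 hi).2))
          (fun _ _ _ => norm_nonneg _)
      rw [← Finset.sum_filter_add_sum_filter_not F (m ≤ ·)] at hF
      linarith [norm_add_le (∑ i ∈ F.filter (m ≤ ·), u i) (∑ i ∈ F.filter (¬m ≤ ·), u i)]
  obtain ⟨φ, hφ, hblock⟩ := exists_strictMono_forall_succ hstep
  choose F hFsub hFnorm using hblock
  have hdisj : Pairwise (Disjoint on fun k => Set.Ico (φ k) (φ (k + 1))) :=
    hφ.monotone.pairwise_disjoint_on_Ico_succ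
  set U : Set ℕ := ⋃ k, (F k : Set ℕ)
  have hU : ∀ k, ∑ i ∈ Finset.Ico (φ k) (φ (k + 1)), U.indicator u i = ∑ i ∈ F k, u i := by
    intro k
    rw [← Finset.sum_indicator_subset u (hFsub k)]
    refine Finset.sum_congr rfl fun i hi => ?_
    have hiff : i ∈ U ↔ i ∈ F k := by
      refine ⟨fun hiU => ?_, fun hiF => Set.mem_iUnion.2 ⟨k, hiF⟩⟩
      obtain ⟨j, hj⟩ := Set.mem_iUnion.1 hiU
      have hjk : j = k := hdisj.eq <| Set.not_disjoint_iff.2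
        ⟨i, by simpa using hFsub j hj, by simpa using hi⟩
      exact hjk ▸ hj
    simp only [Set.indicator_apply, Finset.mem_coe, hiff]
  obtain ⟨N, hN⟩ := Metric.cauchySeq_iff.1 (h U) 1 one_pos
  have hfar := hN (φ (N + 1)) ((Nat.le_succ N).trans (hφ.id_le _)) (φ N) (hφ.id_le N)
  rw [dist_eq_norm, ← Finset.sum_Ico_eq_sub _ (hφ.monotone (Nat.le_succ N)), hU] at hfar
  linarith [hFnorm N]

end NormedGroup

section Ell1

variable {X : Type*} [NormedAddCommGroup X] [NormedSpace ℝ X]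

lemma ell1_hasSum_norm (a : ell1) : HasSum (fun k => ‖a k‖) ‖a‖ := by
  simpa using lp.hasSum_norm (p := 1) (by norm_num) a

variable [CompleteSpace X] {w : ℕ → X}

lemma summable_smul_of_norm_le_one (hw : ∀ k, ‖w k‖ ≤ 1) (a : ell1) :
    Summable fun k => a k • w k :=
  (ell1_hasSum_norm a).summable.of_norm_bounded fun k => by
    rw [norm_smul]
    exact mul_le_of_le_one_right (norm_nonneg _) (hw k)

noncomputable def ell1Synthesis (w : ℕ → X) (hw : ∀ k, ‖w k‖ ≤ 1) : ell1 →L[ℝ] X :=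
  LinearMap.mkContinuous
    { toFun := fun a => ∑' k, a k • w k
      map_add' := fun a b => by
        simp only [lp.coeFn_add, Pi.add_apply, add_smul]
        exact (summable_smul_of_norm_le_one hw a).tsum_add (summable_smul_of_norm_le_one hw b)
      map_smul' := fun c a => by
        simp only [lp.coeFn_smul, Pi.smul_apply, smul_eq_mul, RingHom.id_apply, mul_smul]
        exact (summable_smul_of_norm_le_one hw a).tsum_const_smul c }
    1 fun a => by
      rw [one_mul]
      refine tsum_of_norm_bounded (ell1_hasSum_norm a) fun k => ?_
      rw [norm_smul]
      exact mul_le_of_le_one_right (norm_nonneg _) (hw k)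

lemma ell1Synthesis_hasSum (hw : ∀ k, ‖w k‖ ≤ 1) (a : ell1) :
    HasSum (fun k => a k • w k) (ell1Synthesis w hw a) :=
  (summable_smul_of_norm_le_one hw a).hasSum

lemma norm_ell1Synthesis_le (hw : ∀ k, ‖w k‖ ≤ 1) : ‖ell1Synthesis w hw‖ ≤ 1 :=
  LinearMap.mkContinuous_norm_le _ zero_le_one _

/-- Flipping the signs of the `wₖ` to those of the `aₖ` turns `∑ aₖ wₖ` into `∑ |aₖ| wₖ`, on
which `g` is at least `c ‖a‖`. -/
theorem mul_norm_le_mul_norm_ell1Synthesis (hw : ∀ k, ‖w k‖ ≤ 1) {g : StrongDual ℝ X}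
    (hg : ‖g‖ ≤ 1) {c K : ℝ} (hgw : ∀ k, c ≤ g (w k))
    (hsign : ∀ σ : ℕ → ℝ, (∀ k, |σ k| = 1) →
      ∃ S : X →L[ℝ] X, ‖S‖ ≤ K ∧ ∀ k, S (w k) = σ k • w k)
    (a : ell1) : c * ‖a‖ ≤ K * ‖ell1Synthesis w hw a‖ := by
  set σ : ℕ → ℝ := fun k => if 0 ≤ a k then 1 else -1
  obtain ⟨S, hSK, hSw⟩ := hsign σ fun k => by
    dsimp only [σ]
    split <;> simp
  have hσa : ∀ k, σ k * a k = ‖a k‖ := fun k => by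
    dsimp only [σ]
    split
    · next h => rw [one_mul, Real.norm_of_nonneg h]
    · next h => rw [neg_one_mul, Real.norm_of_nonpos (not_le.1 h).le]
  have hgS : HasSum (fun k => ‖a k‖ * g (w k)) (g (S (ell1Synthesis w hw a))) := by
    have h := (ell1Synthesis_hasSum hw a).mapL (g.comp S)
    rwa [show (fun k => (g.comp S) (a k • w k)) = fun k => ‖a k‖ * g (w k) from funext fun k => by
      rw [ContinuousLinearMap.comp_apply, map_smul, hSw, smul_smul, mul_comm, hσa, map_smul,
        smul_eq_mul]] at h
  calc c * ‖a‖ ≤ g (S (ell1Synthesis w hw a)) :=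
        hasSum_le (fun k => mul_comm c ‖a k‖ ▸ mul_le_mul_of_nonneg_left (hgw k) (norm_nonneg _))
          ((ell1_hasSum_norm a).mul_left c) hgS
    _ ≤ ‖S (ell1Synthesis w hw a)‖ := by
        simpa using (le_abs_self _).trans (g.le_of_opNorm_le hg (S (ell1Synthesis w hw a)))
    _ ≤ K * ‖ell1Synthesis w hw a‖ := S.le_of_opNorm_le hSK _

end Ell1

section Alpha

variable {Y X : Type*} [NormedAddCommGroup Y] [NormedSpace ℝ Y] [Nontrivial Y]
  [NormedAddCommGroup X] [NormedSpace ℝ X]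

lemma bddAbove_alpha_set :
    BddAbove {c : ℝ | ∃ T : Y →L[ℝ] X, ‖T‖ ≤ 1 ∧ ∀ y : Y, c * ‖y‖ ≤ ‖T y‖} := by
  obtain ⟨y, hy⟩ := exists_ne (0 : Y)
  refine ⟨1, ?_⟩
  rintro c ⟨T, hT, hc⟩
  have := (hc y).trans (T.le_of_opNorm_le hT y)
  exact le_of_mul_le_mul_right (by linarith) (norm_pos_iff.2 hy)

lemma alpha_nonneg : 0 ≤ alpha Y X :=
  le_csSup bddAbove_alpha_set ⟨0, by simp, by simp⟩

lemma le_mul_alpha {T : Y →L[ℝ] X} (hT : ‖T‖ ≤ 1) {c K : ℝ} (hK : 0 ≤ K)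
    (h : ∀ y, c * ‖y‖ ≤ K * ‖T y‖) : c ≤ K * alpha Y X := by
  rcases hK.eq_or_lt with rfl | hKpos
  · obtain ⟨y, hy⟩ := exists_ne (0 : Y)
    rw [zero_mul]
    have := h y
    rw [zero_mul] at this
    exact nonpos_of_mul_nonpos_left this (norm_pos_iff.2 hy)
  · rw [← div_le_iff₀' hKpos]
    refine le_csSup bddAbove_alpha_set ⟨T, hT, fun y => ?_⟩
    rw [div_mul_eq_mul_div, div_le_iff₀' hKpos]
    exact h y

end Alpha

section SchauderBasis

variable {X : Type*} [NormedAddCommGroup X] [NormedSpace ℝ X] {x : ℕ → X} {f : ℕ → X →L[ℝ] ℝ}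

lemma IsSchauderBasis.coord_apply (hb : IsSchauderBasis x f) (i j : ℕ) :
    f i (x j) = (Pi.single j 1 : ℕ → ℝ) i := by
  refine (hb.unique (Pi.single j 1) (x j) (tendsto_const_nhds.congr' ?_) i).symm
  filter_upwards [eventually_gt_atTop j] with n hn
  simp [Pi.single_apply, hn]

def IsSignChangeFamily (x : ℕ → X) (f : ℕ → X →L[ℝ] ℝ) (M : (ℕ → ℝ) → X →L[ℝ] X) : Prop :=
  ∀ θ : ℕ → ℝ, (∀ n, |θ n| = 1) → ∀ v : X,
    Tendsto (fun n => ∑ i ∈ Finset.range n, (θ i * f i v) • x i) atTop (𝓝 (M θ v))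

variable {M : (ℕ → ℝ) → X →L[ℝ] X}

lemma IsSignChangeFamily.apply_basis (hM : IsSignChangeFamily x f M) (hb : IsSchauderBasis x f)
    {θ : ℕ → ℝ} (hθ : ∀ n, |θ n| = 1) (j : ℕ) : M θ (x j) = θ j • x j := by
  refine tendsto_nhds_unique (hM θ hθ (x j)) (tendsto_const_nhds.congr' ?_)
  filter_upwards [eventually_gt_atTop j] with n hn
  simp [hb.coord_apply, Pi.single_apply, hn]

lemma IsSignChangeFamily.apply_eq_smul_of_mem_span (hM : IsSignChangeFamily x f M)
    (hb : IsSchauderBasis x f) {θ : ℕ → ℝ} (hθ : ∀ n, |θ n| = 1) {G : Set ℕ} {s : ℝ}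
    (hθG : ∀ i ∈ G, θ i = s) {v : X} (hv : v ∈ Submodule.span ℝ (x '' G)) : M θ v = s • v :=
  LinearMap.eqOn_span' (f := (M θ : X →ₗ[ℝ] X)) (g := s • LinearMap.id)
    (by rintro _ ⟨i, hi, rfl⟩; simp [hM.apply_basis hb hθ, hθG i hi]) hv

/-- With `θ = 1` on `U` and `-1` off `U`, the subseries over `U` is `(v + M θ v) / 2`. -/
lemma IsSignChangeFamily.cauchySeq_indicator (hM : IsSignChangeFamily x f M)
    (hb : IsSchauderBasis x f) (U : Set ℕ) (v : X) :
    CauchySeq fun n => ∑ i ∈ Finset.range n, U.indicator (fun i => f i v • x i) i := by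
  classical
  set θ : ℕ → ℝ := fun i => if i ∈ U then 1 else -1
  have hθ : ∀ n, |θ n| = 1 := fun n => by
    by_cases h : n ∈ U <;> simp [θ, h]
  refine (Tendsto.congr (fun n => ?_)
    (((hb.expand v).add (hM θ hθ v)).const_smul (2⁻¹ : ℝ))).cauchySeq
  rw [← Finset.sum_add_distrib, Finset.smul_sum]
  refine Finset.sum_congr rfl fun i _ => ?_
  by_cases h : i ∈ U
  · rw [Set.indicator_of_mem h, ← add_smul, smul_smul]
    simp only [θ, if_pos h]
    congr 1
    ring
  · rw [Set.indicator_of_notMem h, ← add_smul, smul_smul]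
    simp only [θ, if_neg h]
    ring_nf
    exact zero_smul ℝ _

/-- By the gliding hump the finite partial sums of the expansion of each `v` are bounded, so
`{M θ v}` is bounded and Banach–Steinhaus applies. -/
theorem IsSignChangeFamily.bddAbove_norm [CompleteSpace X] (hM : IsSignChangeFamily x f M)
    (hb : IsSchauderBasis x f) :
    BddAbove (range fun θ : {θ : ℕ → ℝ // ∀ n, |θ n| = 1} => ‖M θ.1‖) := by
  obtain ⟨C', hC'⟩ := banach_steinhaus (g := fun θ : {θ : ℕ → ℝ // ∀ n, |θ n| = 1} => M θ.1)
    fun v => by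
      obtain ⟨C, hC⟩ := exists_norm_finset_sum_le_of_cauchySeq_indicator
        (hM.cauchySeq_indicator hb · v)
      refine ⟨2 * C, fun θ => le_of_tendsto' (hM θ.1 θ.2 v).norm fun n => ?_⟩
      simpa only [mul_smul] using norm_sum_sign_smul_le hC θ.2 (Finset.range n)
  exact ⟨C', forall_mem_range.2 hC'⟩

end SchauderBasis

section TailNorm

variable {X : Type*} [NormedAddCommGroup X] [NormedSpace ℝ X] {y : ℕ → X}

lemma exists_mem_span_lt_apply_of_lt_tailNorm {g : StrongDual ℝ X} {n : ℕ} {c : ℝ}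
    (h : c < tailNorm y g n) :
    ∃ v ∈ Submodule.span ℝ (y '' {i | n ≤ i}), ‖v‖ < 1 ∧ c < g v := by
  obtain ⟨u, hu1, hcu⟩ := (g.comp (tailSpan y n).subtypeL).exists_lt_apply_of_lt_opNorm h
  obtain ⟨u', hu'mem, hu'1, hcu'⟩ : ∃ u' ∈ tailSpan y n, ‖u'‖ < 1 ∧ c < g u' := by
    rcases le_or_gt 0 (g u) with hgu | hgu
    · exact ⟨u, u.2, hu1, by simpa [abs_of_nonneg hgu] using hcu⟩
    · exact ⟨-u, neg_mem u.2, by simpa using hu1, by simpa [abs_of_neg hgu] using hcu⟩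
  have hopen : IsOpen {v : X | ‖v‖ < 1 ∧ c < g v} :=
    (isOpen_lt continuous_norm continuous_const).inter (isOpen_lt continuous_const g.continuous)
  rw [tailSpan, ← SetLike.mem_coe, Submodule.topologicalClosure_coe] at hu'mem
  obtain ⟨v, hv, hvspan⟩ := mem_closure_iff.1 hu'mem _ hopen ⟨hu'1, hcu'⟩
  exact ⟨v, hvspan, hv⟩

lemma exists_lt_mem_span_image_Ico {m : ℕ} {v : X}
    (hv : v ∈ Submodule.span ℝ (y '' {i | m ≤ i})) :
    ∃ n, m < n ∧ v ∈ Submodule.span ℝ (y '' Ico m n) := by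
  induction hv using Submodule.span_induction with
  | mem _ h =>
    obtain ⟨i, hi, rfl⟩ := h
    exact ⟨i + 1, Nat.lt_succ_of_le hi, Submodule.subset_span ⟨i, ⟨hi, lt_add_one i⟩, rfl⟩⟩
  | zero => exact ⟨m + 1, lt_add_one m, zero_mem _⟩
  | add v w _ _ hv hw =>
    obtain ⟨n₁, hn₁, hv⟩ := hv
    obtain ⟨n₂, -, hw⟩ := hw
    have hmono : ∀ n ≤ max n₁ n₂, Submodule.span ℝ (y '' Ico m n) ≤
        Submodule.span ℝ (y '' Ico m (max n₁ n₂)) := fun n hn =>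
      Submodule.span_mono (image_mono (Ico_subset_Ico_right hn))
    exact ⟨max n₁ n₂, hn₁.trans_le (le_max_left _ _),
      add_mem (hmono _ (le_max_left _ _) hv) (hmono _ (le_max_right _ _) hw)⟩
  | smul a v _ hv =>
    obtain ⟨n, hn, hv⟩ := hv
    exact ⟨n, hn, Submodule.smul_mem _ a hv⟩

lemma exists_block_of_lt_limsup_tailNorm {g : StrongDual ℝ X} {c : ℝ}
    (hc : c < limsup (tailNorm y g) atTop) (m : ℕ) :
    ∃ n, m < n ∧ ∃ v ∈ Submodule.span ℝ (y '' Ico m n), ‖v‖ ≤ 1 ∧ c ≤ g v := by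
  have hbdd : IsCoboundedUnder (· ≤ ·) atTop (tailNorm y g) :=
    isCoboundedUnder_le_of_le atTop fun _ => ContinuousLinearMap.opNorm_nonneg _
  obtain ⟨N, hmN, hN⟩ := frequently_atTop.1 (frequently_lt_of_lt_limsup hbdd hc) m
  obtain ⟨v, hv, hv1, hcv⟩ := exists_mem_span_lt_apply_of_lt_tailNorm hN
  obtain ⟨n, hmn, hvn⟩ := exists_lt_mem_span_image_Ico
    (Submodule.span_mono (image_mono fun i (hi : N ≤ i) => hmN.trans hi) hv)
  exact ⟨n, hmn, v, hvn, hv1.le, hcv.le⟩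

end TailNorm

instance : Nontrivial ell1 :=
  ⟨lp.single 1 0 1, 0, fun h => by simpa using congrArg (fun a : ell1 => a 0) h⟩

theorem sh_le_Ku_mul_alpha_general {X : Type*} [NormedAddCommGroup X] [NormedSpace ℝ X]
    [CompleteSpace X]
    (x : ℕ → X) (f : ℕ → X →L[ℝ] ℝ) (hb : IsSchauderBasis x f)
    (M : (ℕ → ℝ) → X →L[ℝ] X)
    (hM : ∀ θ : ℕ → ℝ, (∀ n, |θ n| = 1) → ∀ v : X,
      Filter.Tendsto (fun n => ∑ i ∈ Finset.range n, (θ i * f i v) • x i)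
        Filter.atTop (nhds (M θ v)))
    (Ku : ℝ) (hKu : Ku = ⨆ θ : {θ : ℕ → ℝ // ∀ n, |θ n| = 1}, ‖M θ.1‖) :
    sh x ≤ Ku * alpha ell1 X := by
  have hM : IsSignChangeFamily x f M := hM
  have hKu0 : 0 ≤ Ku := hKu ▸ Real.iSup_nonneg fun θ => norm_nonneg _
  have hMKu : ∀ θ, (∀ n, |θ n| = 1) → ‖M θ‖ ≤ Ku := fun θ hθ =>
    hKu ▸ le_ciSup (hM.bddAbove_norm hb) ⟨θ, hθ⟩
  refine Real.sSup_le ?_ (mul_nonneg hKu0 alpha_nonneg)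
  rintro _ ⟨g, hg, rfl⟩
  refine le_of_forall_lt_imp_le_of_dense fun c hc => ?_
  obtain ⟨φ, hφ, hblock⟩ := exists_strictMono_forall_succ (exists_block_of_lt_limsup_tailNorm hc)
  choose w hwspan hw1 hcw using hblock
  have hsign : ∀ σ : ℕ → ℝ, (∀ k, |σ k| = 1) →
      ∃ S : X →L[ℝ] X, ‖S‖ ≤ Ku ∧ ∀ k, S (w k) = σ k • w k := fun σ hσ => by
    obtain ⟨θ, hθ, hθσ⟩ :=
      exists_sign_eqOn_of_pairwise_disjoint hφ.monotone.pairwise_disjoint_on_Ico_succ hσ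
    exact ⟨M θ, hMKu θ hθ, fun k =>
      hM.apply_eq_smul_of_mem_span hb hθ (hθσ k) (hwspan k)⟩
  exact le_mul_alpha (norm_ell1Synthesis_le hw1) hKu0
    (mul_norm_le_mul_norm_ell1Synthesis hw1 hg hcw hsign)

/-- Theorem 3.5: for an unconditional basis, `sh((xₙ)) ≤ K_u·α_{ℓ₁}(X)`. -/
theorem sh_le_Ku_mul_alpha {X : Type*} [NormedAddCommGroup X] [NormedSpace ℝ X]
    [CompleteSpace X] (hinf : ¬ FiniteDimensional ℝ X)
    (x : ℕ → X) (f : ℕ → X →L[ℝ] ℝ) (hb : IsSchauderBasis x f)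
    (M : (ℕ → ℝ) → X →L[ℝ] X)
    (hM : ∀ θ : ℕ → ℝ, (∀ n, |θ n| = 1) → ∀ v : X,
      Filter.Tendsto (fun n => ∑ i ∈ Finset.range n, (θ i * f i v) • x i)
        Filter.atTop (nhds (M θ v)))
    (Ku : ℝ) (hKu : Ku = ⨆ θ : {θ : ℕ → ℝ // ∀ n, |θ n| = 1}, ‖M θ.1‖) :
    sh x ≤ Ku * alpha ell1 X :=
  sh_le_Ku_mul_alpha_general x f hb M hM Ku hKu
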